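/- arXiv:2512.23178 — 5 statements merged into one kernel-verified Lean document; each statement's English description precedes it below -/
import Mathlib

section
/- Let $a_1,\dots,a_{T+1}$, $b_1,\dots,b_T$, $c_1,\dots,c_{T+1}$ be real sequences with $b_t \ge 0$ for all $t$ and $c_t$ nondecreasing. If $a_1 \le 2c_1$ and $a_{t+1} + b_t \le \frac{1}{2}\max_{s \in [t]} a_s + c_{t+1}$ for all $t \in [T]$, then $a_{T+1} + b_T \le 2c_{T+1}$. -/
theorem algebra_recursion_bound (T : ℕ) (hT : 1 ≤ T) (a b c : ℕ → ℝ)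
    (hb : ∀ t, 1 ≤ t → t ≤ T → 0 ≤ b t)
    (hc : ∀ s t, s ≤ t → c s ≤ c t)
    (h1 : a 1 ≤ 2 * c 1)
    (hrec : ∀ t, (ht1 : 1 ≤ t) → t ≤ T →
      a (t + 1) + b t ≤
        (1 / 2) * ((Finset.Icc 1 t).sup' (Finset.nonempty_Icc.mpr ht1) a) + c (t + 1)) :
    a (T + 1) + b T ≤ 2 * c (T + 1) := by
  have key : ∀ s, 1 ≤ s → s ≤ T → a s ≤ 2 * c s := by
    intro s
    induction s using Nat.strong_induction_on with
    | _ s ih =>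
      intro hs1 hsT
      rcases Nat.eq_or_lt_of_le hs1 with h | h
      · subst h; exact h1
      · obtain ⟨t, rfl⟩ : ∃ t, s = t + 1 := ⟨s - 1, by omega⟩
        have ht1 : 1 ≤ t := by omega
        have htT : t ≤ T := by omega
        have hsup : (Finset.Icc 1 t).sup' (Finset.nonempty_Icc.mpr ht1) a ≤ 2 * c t := by
          apply Finset.sup'_le
          intro x hx
          simp only [Finset.mem_Icc] at hx
          have := ih x (by omega) hx.1 (by omega)
          have := hc x t hx.2
          linarith
        have hr := hrec t ht1 htT
        have hbt := hb t ht1 htT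
        have hct := hc t (t + 1) (by omega)
        linarith
  have hsup : (Finset.Icc 1 T).sup' (Finset.nonempty_Icc.mpr hT) a ≤ 2 * c T := by
    apply Finset.sup'_le
    intro x hx
    simp only [Finset.mem_Icc] at hx
    have := key x hx.1 hx.2
    have := hc x T hx.2
    linarith
  have hr := hrec T hT le_rfl
  have hct := hc T (T + 1) (by omega)
  linarith
end

section
/- For $\mathfrak{p} \in (1,2]$ and real numbers $a, b$, we have $|a+b|^{\mathfrak{p}} \le |a|^{\mathfrak{p}} + \mathfrak{p}|a|^{\mathfrak{p}-1}\mathrm{sgn}(a) b + 2^{2-\mathfrak{p}}|b|^{\mathfrak{p}}$. -/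
/-!
Write `φ x = |x| ^ (p - 1) * sign x`, so that `p * φ` is the derivative of `|x| ^ p`.
With `α = p - 1 ∈ (0, 1]`, `φ` is `α`-Hölder with constant `2 ^ (1 - α)`: for arguments of the
same sign this is the subadditivity of `x ↦ x ^ α`, for opposite signs its concavity.
Hence the derivative of `t ↦ |a + t b| ^ p` exceeds its value at `0` by at most
`p 2 ^ (2 - p) t ^ (p - 1) |b| ^ p`, the derivative of `2 ^ (2 - p) |b| ^ p t ^ p`,
and comparing both sides on `[0, 1]` gives the inequality.
-/

open Set

namespace Real

lemma abs_mul_sign (x : ℝ) : |x| * sign x = x := by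
  rcases lt_trichotomy x 0 with hx | rfl | hx
  · rw [abs_of_neg hx, sign_of_neg hx, neg_mul_neg, mul_one]
  · rw [sign_zero, mul_zero]
  · rw [abs_of_pos hx, sign_of_pos hx, mul_one]

lemma abs_rpow_sub_one_mul_self (q x : ℝ) : |x| ^ (q - 1) * x = |x| ^ q * sign x := by
  rcases eq_or_ne x 0 with rfl | hx
  · simp
  · calc |x| ^ (q - 1) * x = |x| ^ (q - 1 + 1) * sign x := by
          rw [rpow_add_one (abs_ne_zero.2 hx), mul_assoc, abs_mul_sign]
      _ = |x| ^ q * sign x := by rw [sub_add_cancel]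

lemma abs_rpow_mul_sign_of_nonneg {α x : ℝ} (hα : α ≠ 0) (hx : 0 ≤ x) :
    |x| ^ α * sign x = x ^ α := by
  rcases hx.eq_or_lt with rfl | hx
  · simp [zero_rpow hα]
  · rw [abs_of_pos hx, sign_of_pos hx, mul_one]

lemma abs_rpow_mul_sign_of_nonpos {α x : ℝ} (hα : α ≠ 0) (hx : x ≤ 0) :
    |x| ^ α * sign x = -(-x) ^ α := by
  rw [← abs_rpow_mul_sign_of_nonneg hα (neg_nonneg.2 hx), abs_neg, sign_neg, mul_neg, neg_neg]

lemma add_rpow_le_two_rpow_mul_rpow_add {α a b : ℝ} (hα0 : 0 ≤ α) (hα1 : α ≤ 1)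
    (ha : 0 ≤ a) (hb : 0 ≤ b) : a ^ α + b ^ α ≤ 2 ^ (1 - α) * (a + b) ^ α := by
  have hmid := (concaveOn_rpow hα0 hα1).2 (mem_Ici.2 ha) (mem_Ici.2 hb)
    (by norm_num : (0 : ℝ) ≤ 1 / 2) (by norm_num : (0 : ℝ) ≤ 1 / 2) (by norm_num)
  simp only [smul_eq_mul, ← mul_add] at hmid
  rw [one_div, inv_mul_eq_div, inv_mul_eq_div, div_rpow (add_nonneg ha hb) zero_le_two] at hmid
  rw [rpow_sub two_pos, rpow_one]
  have h2α : (0 : ℝ) < 2 ^ α := by positivity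
  field_simp at hmid ⊢
  linarith

lemma abs_rpow_sub_rpow_le {α x y : ℝ} (hα0 : 0 ≤ α) (hα1 : α ≤ 1) (hx : 0 ≤ x) (hy : 0 ≤ y) :
    |x ^ α - y ^ α| ≤ |x - y| ^ α := by
  wlog hxy : y ≤ x generalizing x y
  · rw [abs_sub_comm, abs_sub_comm x]
    exact this hy hx (le_of_not_ge hxy)
  have hsub : x ^ α ≤ (x - y) ^ α + y ^ α := by
    simpa using rpow_add_le_add_rpow (sub_nonneg.2 hxy) hy hα0 hα1
  rw [abs_of_nonneg (sub_nonneg.2 (rpow_le_rpow hy hxy hα0)), abs_of_nonneg (sub_nonneg.2 hxy)]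
  linarith

lemma abs_rpow_mul_sign_sub_le {α : ℝ} (hα0 : 0 < α) (hα1 : α ≤ 1) (x y : ℝ) :
    |(|x| ^ α * sign x) - |y| ^ α * sign y| ≤ 2 ^ (1 - α) * |x - y| ^ α := by
  wlog hxy : y ≤ x generalizing x y
  · rw [abs_sub_comm, abs_sub_comm x]
    exact this y x (le_of_not_ge hxy)
  have h2 : 1 ≤ (2 : ℝ) ^ (1 - α) := one_le_rpow one_le_two (by linarith)
  rcases le_total 0 y with hy | hy
  · rw [abs_rpow_mul_sign_of_nonneg hα0.ne' (hy.trans hxy), abs_rpow_mul_sign_of_nonneg hα0.ne' hy]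
    exact (abs_rpow_sub_rpow_le hα0.le hα1 (hy.trans hxy) hy).trans
      (le_mul_of_one_le_left (by positivity) h2)
  rcases le_total x 0 with hx | hx
  · rw [abs_rpow_mul_sign_of_nonpos hα0.ne' hx, abs_rpow_mul_sign_of_nonpos hα0.ne' hy,
      neg_sub_neg, show x - y = -y - -x by ring]
    exact (abs_rpow_sub_rpow_le hα0.le hα1 (neg_nonneg.2 hy) (neg_nonneg.2 hx)).trans
      (le_mul_of_one_le_left (by positivity) h2)
  · rw [abs_rpow_mul_sign_of_nonneg hα0.ne' hx, abs_rpow_mul_sign_of_nonpos hα0.ne' hy,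
      sub_neg_eq_add, abs_of_nonneg (sub_nonneg.2 hxy), sub_eq_add_neg x,
      abs_of_nonneg (add_nonneg (rpow_nonneg hx α) (rpow_nonneg (neg_nonneg.2 hy) α))]
    exact add_rpow_le_two_rpow_mul_rpow_add hα0.le hα1 hx (neg_nonneg.2 hy)

lemma hasDerivAt_abs_rpow' {p : ℝ} (hp : 1 < p) (x : ℝ) :
    HasDerivAt (fun x ↦ |x| ^ p) (p * (|x| ^ (p - 1) * sign x)) x := by
  simpa [mul_assoc, ← abs_rpow_sub_one_mul_self, sub_sub, show (1 : ℝ) + 1 = 2 by norm_num]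
    using hasDerivAt_abs_rpow x hp

lemma abs_add_mul_rpow_mul_sign_mul_le {p : ℝ} (hp1 : 1 < p) (hp2 : p ≤ 2) (a b : ℝ) {t : ℝ}
    (ht : 0 ≤ t) :
    |a + t * b| ^ (p - 1) * sign (a + t * b) * b
      ≤ |a| ^ (p - 1) * sign a * b + 2 ^ (2 - p) * t ^ (p - 1) * |b| ^ p := by
  have hHolder := abs_rpow_mul_sign_sub_le (α := p - 1) (by linarith) (by linarith) (a + t * b) a
  rw [show 1 - (p - 1) = 2 - p by ring, add_sub_cancel_left, abs_mul, abs_of_nonneg ht,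
    mul_rpow ht (abs_nonneg b)] at hHolder
  have hb : |b| ^ p = |b| ^ (p - 1) * |b| := by
    rw [← rpow_add_one' (abs_nonneg b) (by linarith), sub_add_cancel]
  have hdiff : |a + t * b| ^ (p - 1) * sign (a + t * b) * b - |a| ^ (p - 1) * sign a * b
      ≤ 2 ^ (2 - p) * t ^ (p - 1) * |b| ^ p :=
    calc _ ≤ |(|a + t * b| ^ (p - 1) * sign (a + t * b)) - |a| ^ (p - 1) * sign a| * |b| := by
          rw [← sub_mul, ← abs_mul]; exact le_abs_self _
      _ ≤ 2 ^ (2 - p) * (t ^ (p - 1) * |b| ^ (p - 1)) * |b| := by gcongr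
      _ = 2 ^ (2 - p) * t ^ (p - 1) * |b| ^ p := by rw [hb]; ring
  linarith

end Real

open Real

theorem abs_add_rpow_ineq (p a b : ℝ) (hp1 : 1 < p) (hp2 : p ≤ 2) :
    |a + b| ^ p ≤ |a| ^ p + p * |a| ^ (p - 1) * Real.sign a * b + 2 ^ (2 - p) * |b| ^ p := by
  have hp0 : 0 < p := by linarith
  set c := 2 ^ (2 - p) * |b| ^ p
  let gap : ℝ → ℝ := fun t ↦
    |a| ^ p + t * (p * |a| ^ (p - 1) * sign a * b) + c * t ^ p - |a + t * b| ^ p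
  have hgap_deriv (t : ℝ) (ht : 0 < t) : HasDerivAt gap
      (p * |a| ^ (p - 1) * sign a * b + c * (p * t ^ (p - 1))
        - p * (|a + t * b| ^ (p - 1) * sign (a + t * b)) * b) t := by
    have hline : HasDerivAt (fun t ↦ a + t * b) b t := by
      simpa using ((hasDerivAt_id t).mul_const b).const_add a
    have h := (((hasDerivAt_id t).mul_const (p * |a| ^ (p - 1) * sign a * b)).const_add
      (|a| ^ p)).add ((hasDerivAt_rpow_const (p := p) (Or.inl ht.ne')).const_mul c) |>.sub
      ((hasDerivAt_abs_rpow' hp1 (a + t * b)).comp t hline)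
    simp only [one_mul] at h
    exact h
  have hgap_mono : MonotoneOn gap (Ici 0) := by
    refine monotoneOn_of_hasDerivWithinAt_nonneg (convex_Ici 0) ?_
      (fun t ht ↦ (hgap_deriv t (by simpa using ht)).hasDerivWithinAt) fun t ht ↦ ?_
    · fun_prop (disch := positivity)
    · have h := abs_add_mul_rpow_mul_sign_mul_le hp1 hp2 a b (le_of_lt (by simpa using ht))
      linarith [mul_le_mul_of_nonneg_left h hp0.le]
  have h01 := hgap_mono self_mem_Ici (mem_Ici.2 zero_le_one) zero_le_one
  simp only [gap, zero_mul, add_zero, zero_rpow hp0.ne', mul_zero, sub_self, one_mul, one_rpow,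
    mul_one, sub_nonneg] at h01
  linarith
end

section
/- Let $\xi \in \mathbb{R}^d$ have mutually independent, mean-zero coordinates with $\mathbb{E}[|\xi_i|^{\mathfrak{p}}] = \sigma_i^{\mathfrak{p}}$ for $\mathfrak{p} \in (1,2)$. Then for every unit vector $e = \sum_i \lambda_i e_i$ with $\sum_i \lambda_i^2 = 1$, $\mathbb{E}[|\langle e, \xi \rangle|^{\mathfrak{p}}] \le 2^{2-\mathfrak{p}} \left( \sum_{i=1}^d \sigma_i^{\frac{2\mathfrak{p}}{2-\mathfrak{p}}} \right)^{1 - \frac{\mathfrak{p}}{2}}$. -/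
/-!
Write `φ(x) = sgn x · |x| ^ (p - 1)`, so that `p φ` is the derivative of `|x| ^ p`. Since `φ` is
`(p - 1)`-Hölder with constant `2 ^ (2 - p)`, comparing derivatives in `b` gives
`|a + b| ^ p ≤ |a| ^ p + p φ(a) b + 2 ^ (2 - p) |b| ^ p`. Taking `a` a partial sum of the
`λᵢ ξᵢ` and `b` the next, independent and centred, summand kills the middle term in expectation,
so `E |∑ λᵢ ξᵢ| ^ p ≤ 2 ^ (2 - p) ∑ |λᵢ| ^ p σᵢ ^ p`. Hölder's inequality with exponents `2 / p`
and `2 / (2 - p)` together with `∑ λᵢ ² = 1` bounds the last sum.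
-/

open MeasureTheory ProbabilityTheory

namespace Real

lemma rpow_sub_rpow_le_rpow_sub {s u v : ℝ} (hs0 : 0 ≤ s) (hs1 : s ≤ 1) (hv : 0 ≤ v)
    (hvu : v ≤ u) : u ^ s - v ^ s ≤ (u - v) ^ s := by
  have h := rpow_add_le_add_rpow hv (sub_nonneg.2 hvu) hs0 hs1
  rw [add_sub_cancel] at h
  linarith

lemma rpow_add_rpow_le_two_rpow_mul {s u v : ℝ} (hs0 : 0 ≤ s) (hs1 : s ≤ 1) (hu : 0 ≤ u)
    (hv : 0 ≤ v) : u ^ s + v ^ s ≤ 2 ^ (1 - s) * (u + v) ^ s := by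
  have h := (concaveOn_rpow hs0 hs1).2 (Set.mem_Ici.2 hu) (Set.mem_Ici.2 hv)
    (by norm_num : (0 : ℝ) ≤ 1 / 2) (by norm_num : (0 : ℝ) ≤ 1 / 2) (by norm_num)
  simp only [smul_eq_mul] at h
  rw [← mul_add, ← mul_add, mul_rpow (by norm_num) (by positivity), one_div,
    inv_rpow zero_le_two] at h
  rw [rpow_sub two_pos, rpow_one, div_eq_mul_inv]
  linarith

end Real

/-- `sgn x * |x| ^ (p - 1)`, written so that `p * signedRpow p` is literally the derivative of
`|x| ^ p` given by `hasDerivAt_abs_rpow`. -/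
noncomputable def signedRpow (p x : ℝ) : ℝ := |x| ^ (p - 2) * x

section signedRpow

variable {p : ℝ}

lemma hasDerivAt_abs_rpow_signedRpow (hp : 1 < p) (x : ℝ) :
    HasDerivAt (fun x : ℝ ↦ |x| ^ p) (p * signedRpow p x) x := by
  simpa only [signedRpow, mul_assoc] using hasDerivAt_abs_rpow x hp

lemma measurable_signedRpow : Measurable (signedRpow p) := by
  unfold signedRpow; fun_prop

lemma signedRpow_neg (x : ℝ) : signedRpow p (-x) = -signedRpow p x := by
  simp [signedRpow]

lemma signedRpow_of_nonneg (hp : p ≠ 1) {x : ℝ} (hx : 0 ≤ x) : signedRpow p x = x ^ (p - 1) := by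
  rcases hx.eq_or_lt with rfl | hx
  · simp [signedRpow, Real.zero_rpow (sub_ne_zero.2 hp)]
  · rw [signedRpow, abs_of_pos hx, ← Real.rpow_add_one hx.ne']; ring_nf

lemma signedRpow_of_nonpos (hp : p ≠ 1) {x : ℝ} (hx : x ≤ 0) :
    signedRpow p x = -(-x) ^ (p - 1) := by
  rw [← signedRpow_of_nonneg hp (neg_nonneg.2 hx), signedRpow_neg, neg_neg]

lemma abs_signedRpow (hp : p ≠ 1) (x : ℝ) : |signedRpow p x| = |x| ^ (p - 1) := by
  rw [← signedRpow_of_nonneg hp (abs_nonneg x), signedRpow, signedRpow, abs_mul, abs_abs,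
    abs_of_nonneg (Real.rpow_nonneg (abs_nonneg x) _)]

/-- The constant `2 ^ (2 - p)` is only needed when `x < 0 < y`, where concavity of `t ↦ t ^ (p - 1)`
replaces its subadditivity. -/
lemma signedRpow_sub_le (hp1 : 1 < p) (hp2 : p ≤ 2) {x y : ℝ} (hxy : x ≤ y) :
    signedRpow p y - signedRpow p x ≤ 2 ^ (2 - p) * (y - x) ^ (p - 1) := by
  have hp : p ≠ 1 := hp1.ne'
  have hs0 : 0 ≤ p - 1 := by linarith
  have hs1 : p - 1 ≤ 1 := by linarith
  have hC : 1 ≤ (2 : ℝ) ^ (2 - p) := Real.one_le_rpow one_le_two (by linarith)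
  have hyx : 0 ≤ (y - x) ^ (p - 1) := Real.rpow_nonneg (sub_nonneg.2 hxy) _
  rcases le_total 0 x with hx | hx
  · rw [signedRpow_of_nonneg hp hx, signedRpow_of_nonneg hp (hx.trans hxy)]
    nlinarith [Real.rpow_sub_rpow_le_rpow_sub hs0 hs1 hx hxy]
  rcases le_total y 0 with hy | hy
  · rw [signedRpow_of_nonpos hp hx, signedRpow_of_nonpos hp hy]
    have := Real.rpow_sub_rpow_le_rpow_sub hs0 hs1 (neg_nonneg.2 hy) (neg_le_neg hxy)
    rw [neg_sub_neg] at this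
    nlinarith
  · rw [signedRpow_of_nonneg hp hy, signedRpow_of_nonpos hp hx, sub_neg_eq_add,
      show 2 - p = 1 - (p - 1) by ring, sub_eq_add_neg y x]
    exact Real.rpow_add_rpow_le_two_rpow_mul hs0 hs1 hy (neg_nonneg.2 hx)

lemma abs_add_rpow_le_of_nonneg (hp1 : 1 < p) (hp2 : p ≤ 2) (a : ℝ) {b : ℝ} (hb : 0 ≤ b) :
    |a + b| ^ p ≤ |a| ^ p + p * signedRpow p a * b + 2 ^ (2 - p) * |b| ^ p := by
  set g : ℝ → ℝ := fun b ↦ |a| ^ p + p * signedRpow p a * b + 2 ^ (2 - p) * |b| ^ p - |a + b| ^ p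
  have hg' (b : ℝ) : HasDerivAt g
      (p * signedRpow p a + 2 ^ (2 - p) * (p * signedRpow p b) - p * signedRpow p (a + b)) b := by
    have h := (hasDerivAt_abs_rpow_signedRpow hp1 (a + b)).comp b ((hasDerivAt_id b).const_add a)
    simp only [mul_one] at h
    exact (((hasDerivAt_id b).const_mul _).const_add _).add
      ((hasDerivAt_abs_rpow_signedRpow hp1 b).const_mul _) |>.sub h |>.congr_deriv (by ring)
  have hmono : MonotoneOn g (Set.Ici 0) := by
    refine monotoneOn_of_hasDerivWithinAt_nonneg (convex_Ici 0)
      (fun b _ ↦ (hg' b).continuousAt.continuousWithinAt) (fun b _ ↦ (hg' b).hasDerivWithinAt)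
      fun b hb ↦ ?_
    rw [interior_Ici, Set.mem_Ioi] at hb
    have h := signedRpow_sub_le hp1 hp2 (le_add_of_nonneg_right hb.le : a ≤ a + b)
    rw [add_sub_cancel_left, ← signedRpow_of_nonneg hp1.ne' hb.le] at h
    nlinarith
  have h0 : g 0 = 0 := by simp [g, Real.zero_rpow (by linarith : p ≠ 0)]
  have := hmono Set.self_mem_Ici (Set.mem_Ici.2 hb) hb
  simp only [h0, g] at this
  linarith

lemma abs_add_rpow_le (hp1 : 1 < p) (hp2 : p ≤ 2) (a b : ℝ) :
    |a + b| ^ p ≤ |a| ^ p + p * signedRpow p a * b + 2 ^ (2 - p) * |b| ^ p := by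
  rcases le_total 0 b with hb | hb
  · exact abs_add_rpow_le_of_nonneg hp1 hp2 a hb
  · have h := abs_add_rpow_le_of_nonneg hp1 hp2 (-a) (neg_nonneg.2 hb)
    rw [← neg_add, abs_neg, abs_neg, abs_neg, signedRpow_neg] at h
    linarith

end signedRpow

section moments

variable {Ω : Type*} [MeasurableSpace Ω] {μ : Measure Ω} {p : ℝ}

lemma MeasureTheory.MemLp.integrable_abs_rpow [IsFiniteMeasure μ] {f : Ω → ℝ} (hp : 0 ≤ p)
    (hf : MemLp f (ENNReal.ofReal p) μ) : Integrable (fun ω ↦ |f ω| ^ p) μ := by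
  simpa [hp] using hf.integrable_norm_rpow'

lemma MeasureTheory.MemLp.integrable_signedRpow_comp [IsFiniteMeasure μ] {f : Ω → ℝ}
    (hp1 : 1 < p) (hf : MemLp f (ENNReal.ofReal p) μ) :
    Integrable (fun ω ↦ signedRpow p (f ω)) μ := by
  have hf' : MemLp f (ENNReal.ofReal (p - 1)) μ :=
    hf.mono_exponent (ENNReal.ofReal_le_ofReal (by linarith))
  refine (hf'.integrable_abs_rpow (by linarith)).mono'
    (measurable_signedRpow.comp_aemeasurable hf.aemeasurable).aestronglyMeasurable ?_
  filter_upwards with ω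
  rw [Real.norm_eq_abs, abs_signedRpow hp1.ne']

/-- By independence, the first-order term of `abs_add_rpow_le` has mean zero. -/
lemma integral_abs_add_rpow_le [IsFiniteMeasure μ] {S Y : Ω → ℝ} (hp1 : 1 < p) (hp2 : p ≤ 2)
    (hS : MemLp S (ENNReal.ofReal p) μ) (hY : MemLp Y (ENNReal.ofReal p) μ)
    (hSY : IndepFun S Y μ) (hY0 : ∫ ω, Y ω ∂μ = 0) :
    ∫ ω, |S ω + Y ω| ^ p ∂μ ≤ ∫ ω, |S ω| ^ p ∂μ + 2 ^ (2 - p) * ∫ ω, |Y ω| ^ p ∂μ := by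
  have hφS := hS.integrable_signedRpow_comp hp1
  have hφSY : IndepFun (fun ω ↦ signedRpow p (S ω)) Y μ :=
    hSY.comp measurable_signedRpow measurable_id
  have hcross : ∫ ω, signedRpow p (S ω) * Y ω ∂μ = 0 := by
    rw [← Pi.mul_def, hφSY.integral_mul_eq_mul_integral hφS.aestronglyMeasurable
      hY.aestronglyMeasurable, hY0, mul_zero]
  have hS_int := hS.integrable_abs_rpow (by linarith)
  have hcross_int : Integrable (fun ω ↦ p * (signedRpow p (S ω) * Y ω)) μ :=
    (hφSY.integrable_mul hφS (hY.integrable (by simpa using hp1.le))).const_mul p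
  have hY_int := (hY.integrable_abs_rpow (by linarith)).const_mul (2 ^ (2 - p))
  calc ∫ ω, |S ω + Y ω| ^ p ∂μ
      ≤ ∫ ω, |S ω| ^ p + p * (signedRpow p (S ω) * Y ω) + 2 ^ (2 - p) * |Y ω| ^ p ∂μ := by
        refine integral_mono_of_nonneg (.of_forall fun ω ↦ by positivity)
          ((hS_int.add hcross_int).add hY_int) (.of_forall fun ω ↦ ?_)
        simpa only [mul_assoc] using abs_add_rpow_le hp1 hp2 (S ω) (Y ω)
    _ = ∫ ω, |S ω| ^ p ∂μ + 2 ^ (2 - p) * ∫ ω, |Y ω| ^ p ∂μ := by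
        rw [integral_add (f := fun ω ↦ |S ω| ^ p + p * (signedRpow p (S ω) * Y ω))
          (hS_int.add hcross_int) hY_int, integral_add hS_int hcross_int,
          integral_const_mul, integral_const_mul, hcross, mul_zero, add_zero]

theorem integral_abs_sum_rpow_le [IsProbabilityMeasure μ] {ι : Type*} {X : ι → Ω → ℝ}
    (hp1 : 1 < p) (hp2 : p ≤ 2) (hX : ∀ i, Measurable (X i)) (hindep : iIndepFun X μ)
    (hLp : ∀ i, MemLp (X i) (ENNReal.ofReal p) μ) (hmean : ∀ i, ∫ ω, X i ω ∂μ = 0)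
    (s : Finset ι) :
    ∫ ω, |∑ i ∈ s, X i ω| ^ p ∂μ ≤ 2 ^ (2 - p) * ∑ i ∈ s, ∫ ω, |X i ω| ^ p ∂μ := by
  classical
  induction s using Finset.induction_on with
  | empty => simp [Real.zero_rpow (by linarith : p ≠ 0)]
  | insert i s hi ih =>
    have hind : IndepFun (fun ω ↦ ∑ j ∈ s, X j ω) (X i) μ := by
      convert hindep.indepFun_finsetSum_of_notMem hX hi
      simp only [Finset.sum_apply]
    simp only [Finset.sum_insert hi, add_comm (X i _)]
    calc ∫ ω, |∑ j ∈ s, X j ω + X i ω| ^ p ∂μ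
        ≤ ∫ ω, |∑ j ∈ s, X j ω| ^ p ∂μ + 2 ^ (2 - p) * ∫ ω, |X i ω| ^ p ∂μ :=
          integral_abs_add_rpow_le hp1 hp2 (memLp_finsetSum s fun j _ ↦ hLp j) (hLp i) hind
            (hmean i)
      _ ≤ 2 ^ (2 - p) * (∫ ω, |X i ω| ^ p ∂μ + ∑ j ∈ s, ∫ ω, |X j ω| ^ p ∂μ) := by
          linarith

end moments

lemma sum_abs_rpow_mul_rpow_le {ι : Type*} (s : Finset ι) {p : ℝ} (hp0 : 0 < p) (hp2 : p < 2)
    (lam σ : ι → ℝ) (hσ : ∀ i ∈ s, 0 ≤ σ i) :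
    ∑ i ∈ s, |lam i| ^ p * σ i ^ p ≤
      (∑ i ∈ s, lam i ^ 2) ^ (p / 2) * (∑ i ∈ s, σ i ^ (2 * p / (2 - p))) ^ (1 - p / 2) := by
  have hpq : Real.HolderConjugate (2 / p) (2 / (2 - p)) :=
    ⟨by field_simp; ring, by positivity, div_pos two_pos (by linarith)⟩
  have h := Real.inner_le_Lp_mul_Lq_of_nonneg s hpq (f := fun i ↦ |lam i| ^ p)
    (g := fun i ↦ σ i ^ p) (fun i _ ↦ by positivity) fun i hi ↦ Real.rpow_nonneg (hσ i hi) _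
  have hlam : ∀ i ∈ s, (|lam i| ^ p) ^ (2 / p) = lam i ^ 2 := fun i _ ↦ by
    rw [← Real.rpow_mul (abs_nonneg _), mul_div_cancel₀ 2 hp0.ne', Real.rpow_two, sq_abs]
  have hσ' : ∀ i ∈ s, (σ i ^ p) ^ (2 / (2 - p)) = σ i ^ (2 * p / (2 - p)) := fun i hi ↦ by
    rw [← Real.rpow_mul (hσ i hi), mul_div_assoc', mul_comm p]
  rw [Finset.sum_congr rfl hlam, Finset.sum_congr rfl hσ', one_div_div, one_div_div] at h
  convert h using 3
  ring

theorem inner_moment_upper_bound_general {Ω : Type*} [MeasurableSpace Ω]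
    (μ : Measure Ω) [IsProbabilityMeasure μ]
    (d : ℕ) (ξ : Ω → Fin d → ℝ) (hξ : ∀ i, Measurable fun ω => ξ ω i)
    (hindep : iIndepFun
      (fun i ω => ξ ω i) μ)
    (p : ℝ) (hp1 : 1 < p) (hp2 : p < 2)
    (σ : Fin d → ℝ) (hσ : ∀ i, 0 ≤ σ i)
    (hintp : ∀ i, Integrable (fun ω => |ξ ω i| ^ p) μ)
    (hmean : ∀ i, ∫ ω, ξ ω i ∂μ = 0)
    (hmom : ∀ i, ∫ ω, |ξ ω i| ^ p ∂μ = σ i ^ p)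
    (lam : Fin d → ℝ) (hlam : ∑ i, lam i ^ 2 = 1) :
    ∫ ω, |∑ i, lam i * ξ ω i| ^ p ∂μ ≤
      2 ^ (2 - p) * (∑ i, σ i ^ (2 * p / (2 - p))) ^ (1 - p / 2) := by
  have hLp (i : Fin d) : MemLp (fun ω ↦ ξ ω i) (ENNReal.ofReal p) μ :=
    (integrable_norm_rpow_iff (hξ i).aestronglyMeasurable
      (ENNReal.ofReal_pos.2 (by linarith)).ne' ENNReal.ofReal_ne_top).1
      (by simpa [ENNReal.toReal_ofReal (by linarith : 0 ≤ p)] using hintp i)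
  have hmoment (i : Fin d) : ∫ ω, |lam i * ξ ω i| ^ p ∂μ = |lam i| ^ p * σ i ^ p := by
    simp_rw [abs_mul, Real.mul_rpow (abs_nonneg _) (abs_nonneg _), integral_const_mul, hmom]
  calc ∫ ω, |∑ i, lam i * ξ ω i| ^ p ∂μ
      ≤ 2 ^ (2 - p) * ∑ i, ∫ ω, |lam i * ξ ω i| ^ p ∂μ :=
        integral_abs_sum_rpow_le hp1 hp2.le (fun i ↦ (hξ i).const_mul (lam i))
          (hindep.comp _ fun i ↦ measurable_const_mul (lam i)) (fun i ↦ (hLp i).const_mul (lam i))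
          (fun i ↦ by rw [integral_const_mul, hmean, mul_zero]) Finset.univ
    _ ≤ 2 ^ (2 - p) * (∑ i, σ i ^ (2 * p / (2 - p))) ^ (1 - p / 2) := by
        simp_rw [hmoment]
        gcongr
        simpa [hlam] using sum_abs_rpow_mul_rpow_le Finset.univ (by linarith) hp2 lam σ
          fun i _ ↦ hσ i

theorem inner_moment_upper_bound {Ω : Type*} [MeasurableSpace Ω]
    (μ : Measure Ω) [IsProbabilityMeasure μ]
    (d : ℕ) (ξ : Ω → Fin d → ℝ) (hξ : ∀ i, Measurable fun ω => ξ ω i)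
    (hindep : iIndepFun
      (fun i ω => ξ ω i) μ)
    (p : ℝ) (hp1 : 1 < p) (hp2 : p < 2)
    (σ : Fin d → ℝ) (hσ : ∀ i, 0 ≤ σ i)
    (hint : ∀ i, Integrable (fun ω => ξ ω i) μ)
    (hintp : ∀ i, Integrable (fun ω => |ξ ω i| ^ p) μ)
    (hmean : ∀ i, ∫ ω, ξ ω i ∂μ = 0)
    (hmom : ∀ i, ∫ ω, |ξ ω i| ^ p ∂μ = σ i ^ p)
    (lam : Fin d → ℝ) (hlam : ∑ i, lam i ^ 2 = 1) :
    ∫ ω, |∑ i, lam i * ξ ω i| ^ p ∂μ ≤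
      2 ^ (2 - p) * (∑ i, σ i ^ (2 * p / (2 - p))) ^ (1 - p / 2) :=
  inner_moment_upper_bound_general μ d ξ hξ hindep p hp1 hp2 σ hσ hintp hmean hmom lam hlam
end

section
/- With $f_v$ as defined (sum over $i$ of $M_i q_i (\frac{1+v_i\theta_i}{2}|x_i - y_i| + \frac{1-v_i\theta_i}{2}|x_i + y_i|)$) and $f_{v,\star} = \min f_v$, for all $x \in \mathbb{R}^d$ and all $u, v \in \{\pm 1\}^d$: $f_u(x) - f_{u,\star} + f_v(x) - f_{v,\star} \ge \sum_{i=1}^d 2\theta_i q_i M_i |y_i| \, \mathbf{1}[u_i \neq v_i]$. -/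
theorem hard_function_separation (d : ℕ) (u v θ q M y : Fin d → ℝ)
    (hu : ∀ i, u i = 1 ∨ u i = -1) (hv : ∀ i, v i = 1 ∨ v i = -1)
    (hθ : ∀ i, 0 ≤ θ i ∧ θ i ≤ 1) (hq : ∀ i, 0 ≤ q i ∧ q i ≤ 1) (hM : ∀ i, 0 ≤ M i)
    (x : Fin d → ℝ) :
    (∑ i, 2 * θ i * q i * M i * |y i| * (if u i ≠ v i then 1 else 0))
      ≤ ((∑ i, M i * q i * ((1 + u i * θ i) / 2 * |x i - y i| +
            (1 - u i * θ i) / 2 * |x i + y i|))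
          - ∑ i, (1 - θ i) * q i * M i * |y i|)
        + ((∑ i, M i * q i * ((1 + v i * θ i) / 2 * |x i - y i| +
              (1 - v i * θ i) / 2 * |x i + y i|))
            - ∑ i, (1 - θ i) * q i * M i * |y i|) := by
  have key : ∀ i, 2 * θ i * q i * M i * |y i| * (if u i ≠ v i then 1 else 0)
      ≤ (M i * q i * ((1 + u i * θ i) / 2 * |x i - y i| +
            (1 - u i * θ i) / 2 * |x i + y i|) - (1 - θ i) * q i * M i * |y i|)
        + (M i * q i * ((1 + v i * θ i) / 2 * |x i - y i| +
            (1 - v i * θ i) / 2 * |x i + y i|) - (1 - θ i) * q i * M i * |y i|) := by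
    intro i
    have ha : (0:ℝ) ≤ |x i - y i| := abs_nonneg _
    have hb : (0:ℝ) ≤ |x i + y i| := abs_nonneg _
    have hy : (0:ℝ) ≤ |y i| := abs_nonneg _
    have hab : 2 * |y i| ≤ |x i - y i| + |x i + y i| := by
      have := abs_sub_abs_le_abs_sub (x i + y i) (x i - y i)
      have h2 : |(x i + y i) - (x i - y i)| = |2 * y i| := by ring_nf
      have := abs_sub (x i + y i) (x i - y i)
      calc 2 * |y i| = |(x i + y i) - (x i - y i)| := by
            rw [show (x i + y i) - (x i - y i) = 2 * y i by ring, abs_mul]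
            simp [abs_of_nonneg]
        _ ≤ |x i + y i| + |x i - y i| := abs_sub _ _
        _ = |x i - y i| + |x i + y i| := by ring
    obtain ⟨hθ0, hθ1⟩ := hθ i
    obtain ⟨hq0, _⟩ := hq i
    have hM0 := hM i
    rcases hu i with h1 | h1 <;> rcases hv i with h2 | h2 <;> rw [h1, h2] <;>
      simp only [ne_eq] <;> norm_num <;>
      nlinarith [mul_nonneg (mul_nonneg hM0 hq0) ha, mul_nonneg (mul_nonneg hM0 hq0) hb,
        mul_nonneg (mul_nonneg hM0 hq0) hy, mul_nonneg (mul_nonneg (mul_nonneg hM0 hq0) hθ0) ha,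
        mul_nonneg (mul_nonneg (mul_nonneg hM0 hq0) hθ0) hb,
        mul_nonneg (mul_nonneg (mul_nonneg hM0 hq0) (sub_nonneg.2 hθ1)) ha,
        mul_nonneg (mul_nonneg (mul_nonneg hM0 hq0) (sub_nonneg.2 hθ1)) hb,
        mul_le_mul_of_nonneg_left hab (mul_nonneg (mul_nonneg hM0 hq0) hθ0),
        mul_le_mul_of_nonneg_left hab (mul_nonneg (mul_nonneg hM0 hq0) (sub_nonneg.2 hθ1))]
  calc (∑ i, 2 * θ i * q i * M i * |y i| * (if u i ≠ v i then 1 else 0))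
      ≤ ∑ i, ((M i * q i * ((1 + u i * θ i) / 2 * |x i - y i| +
            (1 - u i * θ i) / 2 * |x i + y i|) - (1 - θ i) * q i * M i * |y i|)
        + (M i * q i * ((1 + v i * θ i) / 2 * |x i - y i| +
            (1 - v i * θ i) / 2 * |x i + y i|) - (1 - θ i) * q i * M i * |y i|)) :=
        Finset.sum_le_sum fun i _ => key i
    _ = _ := by rw [Finset.sum_add_distrib, Finset.sum_sub_distrib, Finset.sum_sub_distrib]
end

section
/- Let $(X_t)_{t=1}^T$ be random variables adapted to a filtration $(\mathcal{F}_t)_{t=0}^T$ such that almost surely $|X_t| \le b$ and $\mathbb{E}[X_t^2 \mid \mathcal{F}_{t-1}] \le \sigma_t^2$ for deterministic constants $b \ge 0$ and $\sigma_t^2$. Then for any $\delta \in (0,1]$, with probability at least $1 - \delta$, $\sum_{t=1}^T X_t^2 \le \frac{7b^2}{6}\ln\frac{1}{\delta} + 2\sum_{t=1}^T \sigma_t^2$. -/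
/-!
Chernoff's method for the increments `Z_t = X_t²`, which lie in `[0, b²]`. Convexity of `exp`
gives `exp (l Z) ≤ 1 + c Z` with `c = (exp (l b²) - 1) / b²`, hence
`E[exp (l Z_t) | ℱ_{t-1}] ≤ 1 + c σ_t² ≤ exp (c σ_t²)`. Peeling off the last factor with the
tower property bounds `E[exp (l ∑ Z_t)]` by `exp (c ∑ σ_t²)`, and Markov's inequality at
`l = 5 / (4 b²)` gives the tail bound. When `b = 0` every `X_t` vanishes almost surely.
-/

open MeasureTheory ProbabilityTheory Real Finset

lemma Real.exp_mul_le_one_add_mul {t : ℝ} (ht₀ : 0 ≤ t) (ht₁ : t ≤ 1) (x : ℝ) :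
    exp (t * x) ≤ 1 + t * (exp x - 1) :=
  calc
    _ = exp ((1 - t) * 0 + t * x) := by ring_nf
    _ ≤ (1 - t) * exp 0 + t * exp x :=
        convexOn_exp.2 (Set.mem_univ _) (Set.mem_univ _) (by linarith) ht₀ (by ring)
    _ = _ := by rw [exp_zero]; ring

lemma Real.exp_five_div_four_lt : exp (5 / 4) < 7 / 2 := by
  refine lt_of_pow_lt_pow_left₀ 4 (by norm_num) ?_
  calc exp (5 / 4) ^ 4 = exp 1 ^ 5 := by rw [← exp_nat_mul, ← exp_nat_mul]; norm_num
    _ < 2.7182818286 ^ 5 := pow_lt_pow_left₀ exp_one_lt_d9 (exp_pos 1).le (by norm_num)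
    _ < (7 / 2) ^ 4 := by norm_num

lemma ofReal_one_sub_le_measure_of_compl_le {Ω : Type*} {m0 : MeasurableSpace Ω}
    {μ : Measure Ω} [IsProbabilityMeasure μ] {s : Set Ω} {δ : ℝ} (hδ : 0 ≤ δ)
    (h : μ sᶜ ≤ ENNReal.ofReal δ) :
    ENNReal.ofReal (1 - δ) ≤ μ s :=
  calc ENNReal.ofReal (1 - δ) = 1 - ENNReal.ofReal δ := by
        rw [ENNReal.ofReal_sub _ hδ, ENNReal.ofReal_one]
    _ ≤ 1 - μ sᶜ := tsub_le_tsub_left h 1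
    _ ≤ μ s := tsub_le_iff_right.2 (by simpa using measure_univ_le_add_compl s (μ := μ))

section

variable {Ω : Type*} {m m0 : MeasurableSpace Ω} {μ : Measure Ω}

lemma integrable_exp_of_ae_le [IsFiniteMeasure μ] {f : Ω → ℝ} {C : ℝ}
    (hf : AEStronglyMeasurable f μ) (hC : ∀ᵐ ω ∂μ, f ω ≤ C) :
    Integrable (fun ω => exp (f ω)) μ := by
  refine (integrable_const (exp C)).mono' (continuous_exp.comp_aestronglyMeasurable hf) ?_
  filter_upwards [hC] with ω hω
  rw [norm_of_nonneg (exp_pos _).le]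
  exact exp_le_exp.2 hω

lemma integral_mul_le_of_condExp_le (hm : m ≤ m0) [SigmaFinite (μ.trim hm)] {g f : Ω → ℝ}
    {k : ℝ} (hg : StronglyMeasurable[m] g) (hg₀ : 0 ≤ᵐ[μ] g) (hgi : Integrable g μ)
    (hf : Integrable f μ) (hgf : Integrable (g * f) μ) (hk : μ[f | m] ≤ᵐ[μ] fun _ => k) :
    ∫ ω, g ω * f ω ∂μ ≤ k * ∫ ω, g ω ∂μ := by
  have hpull : μ[g * f | m] =ᵐ[μ] g * μ[f | m] :=
    condExp_mul_of_stronglyMeasurable_left hg hgf hf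
  calc ∫ ω, g ω * f ω ∂μ = ∫ ω, (g * μ[f | m]) ω ∂μ :=
        (integral_condExp hm).symm.trans (integral_congr_ae hpull)
    _ ≤ ∫ ω, g ω * k ∂μ := by
        refine integral_mono_ae (integrable_condExp.congr hpull) (hgi.mul_const k) ?_
        filter_upwards [hg₀, hk] with ω hω₀ hωk
        exact mul_le_mul_of_nonneg_left hωk hω₀
    _ = k * ∫ ω, g ω ∂μ := by rw [integral_mul_const, mul_comm]

lemma condExp_exp_mul_le [IsFiniteMeasure μ] (hm : m ≤ m0) {Z : Ω → ℝ} {B l v : ℝ}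
    (hB : 0 < B) (hl : 0 ≤ l) (hZm : AEStronglyMeasurable Z μ)
    (hZ : ∀ᵐ ω ∂μ, 0 ≤ Z ω ∧ Z ω ≤ B) (hv : μ[Z | m] ≤ᵐ[μ] fun _ => v) :
    μ[fun ω => exp (l * Z ω) | m] ≤ᵐ[μ] fun _ => exp ((exp (l * B) - 1) / B * v) := by
  set c := (exp (l * B) - 1) / B
  have hc : 0 ≤ c := div_nonneg (by linarith [one_le_exp (mul_nonneg hl hB.le)]) hB.le
  have hZi : Integrable Z μ := (integrable_const B).mono' hZm <| by
    filter_upwards [hZ] with ω hω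
    rw [norm_of_nonneg hω.1]
    exact hω.2
  have hexpi : Integrable (fun ω => exp (l * Z ω)) μ :=
    integrable_exp_of_ae_le (hZm.const_mul l) <| by
      filter_upwards [hZ] with ω hω using mul_le_mul_of_nonneg_left hω.2 hl
  have hchord : (fun ω => exp (l * Z ω)) ≤ᵐ[μ] fun ω => 1 + c * Z ω := by
    filter_upwards [hZ] with ω hω
    calc exp (l * Z ω) = exp (Z ω / B * (l * B)) := by field_simp
      _ ≤ 1 + Z ω / B * (exp (l * B) - 1) :=
        exp_mul_le_one_add_mul (div_nonneg hω.1 hB.le) ((div_le_one hB).2 hω.2) (l * B)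
      _ = 1 + c * Z ω := by ring
  have hlin : μ[fun ω => 1 + c * Z ω | m] =ᵐ[μ] fun ω => 1 + c * μ[Z | m] ω := by
    filter_upwards [condExp_add (integrable_const 1) (hZi.const_mul c) m, condExp_smul c Z m]
      with ω h₁ h₂
    rw [Pi.add_apply, condExp_const hm] at h₁
    exact h₁.trans (congrArg (1 + ·) h₂)
  have hrhs : Integrable (fun ω => 1 + c * Z ω) μ := (integrable_const 1).add (hZi.const_mul c)
  filter_upwards [condExp_mono (m := m) hexpi hrhs hchord, hlin, hv] with ω h₁ h₂ h₃
  calc μ[fun ω => exp (l * Z ω) | m] ω ≤ 1 + c * μ[Z | m] ω := h₁.trans_eq h₂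
    _ ≤ 1 + c * v := by gcongr
    _ ≤ exp (c * v) := by linarith [add_one_le_exp (c * v)]

variable [IsProbabilityMeasure μ] {ℱ : Filtration ℕ m0}

lemma integral_exp_sum_Icc_le {Y : ℕ → Ω → ℝ} (hY : Adapted ℱ Y) {C : ℝ} {κ : ℕ → ℝ}
    {n : ℕ} (hYC : ∀ t ∈ Icc 1 n, ∀ᵐ ω ∂μ, Y t ω ≤ C)
    (hκ : ∀ t ∈ Icc 1 n, μ[fun ω => exp (Y t ω) | ℱ (t - 1)] ≤ᵐ[μ] fun _ => exp (κ t)) :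
    ∫ ω, exp (∑ t ∈ Icc 1 n, Y t ω) ∂μ ≤ exp (∑ t ∈ Icc 1 n, κ t) := by
  induction n with
  | zero => simp
  | succ n ih =>
    have hsub : Icc 1 n ⊆ Icc 1 (n + 1) := Icc_subset_Icc_right n.le_succ
    have htop : n + 1 ∈ Icc 1 (n + 1) := by simp
    have hsplit (ω : Ω) : exp (∑ t ∈ Icc 1 (n + 1), Y t ω) =
        exp (∑ t ∈ Icc 1 n, Y t ω) * exp (Y (n + 1) ω) := by
      rw [sum_Icc_succ_top (Nat.le_add_left 1 n), exp_add]
    have hmeas (k : ℕ) : Measurable[ℱ k] fun ω => ∑ t ∈ Icc 1 k, Y t ω :=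
      Finset.measurable_fun_sum _ fun t ht => (hY t).mono (ℱ.mono (mem_Icc.1 ht).2) le_rfl
    have hint (k : ℕ) (hk : k ≤ n + 1) :
        Integrable (fun ω => exp (∑ t ∈ Icc 1 k, Y t ω)) μ :=
      integrable_exp_of_ae_le ((hmeas k).mono (ℱ.le k) le_rfl).aestronglyMeasurable <| by
        filter_upwards [(Filter.eventually_all_finset _).2
          fun t ht => hYC t (Icc_subset_Icc_right hk ht)] with ω hω using sum_le_sum hω
    calc ∫ ω, exp (∑ t ∈ Icc 1 (n + 1), Y t ω) ∂μ
        = ∫ ω, exp (∑ t ∈ Icc 1 n, Y t ω) * exp (Y (n + 1) ω) ∂μ := by simp only [hsplit]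
      _ ≤ exp (κ (n + 1)) * ∫ ω, exp (∑ t ∈ Icc 1 n, Y t ω) ∂μ :=
          integral_mul_le_of_condExp_le (ℱ.le n) (hmeas n).exp.stronglyMeasurable
            (ae_of_all _ fun ω => (exp_pos _).le) (hint n n.le_succ)
            (integrable_exp_of_ae_le ((hY _).mono (ℱ.le _) le_rfl).aestronglyMeasurable
              (hYC _ htop))
            ((hint (n + 1) le_rfl).congr (ae_of_all _ hsplit)) (hκ _ htop)
      _ ≤ exp (κ (n + 1)) * exp (∑ t ∈ Icc 1 n, κ t) := by
          gcongr
          exact ih (fun t ht => hYC t (hsub ht)) fun t ht => hκ t (hsub ht)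
      _ = exp (∑ t ∈ Icc 1 (n + 1), κ t) := by
          rw [sum_Icc_succ_top (Nat.le_add_left 1 n), exp_add, mul_comm]

variable {Z : ℕ → Ω → ℝ} {B l : ℝ} {v : ℕ → ℝ} {n : ℕ}

lemma integrable_exp_mul_sum_Icc (hZ : Adapted ℱ Z) (hl : 0 ≤ l)
    (hZB : ∀ t ∈ Icc 1 n, ∀ᵐ ω ∂μ, Z t ω ≤ B) :
    Integrable (fun ω => exp (l * ∑ t ∈ Icc 1 n, Z t ω)) μ := by
  refine integrable_exp_of_ae_le (C := l * ∑ t ∈ Icc 1 n, B)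
    ((Finset.measurable_fun_sum _ fun t _ =>
      (hZ t).mono (ℱ.le t) le_rfl).const_mul l).aestronglyMeasurable ?_
  filter_upwards [(Filter.eventually_all_finset _).2 hZB] with ω hω
  exact mul_le_mul_of_nonneg_left (sum_le_sum hω) hl

lemma mgf_sum_Icc_le (hZ : Adapted ℱ Z) (hB : 0 < B) (hl : 0 ≤ l)
    (hZB : ∀ t ∈ Icc 1 n, ∀ᵐ ω ∂μ, 0 ≤ Z t ω ∧ Z t ω ≤ B)
    (hv : ∀ t ∈ Icc 1 n, μ[Z t | ℱ (t - 1)] ≤ᵐ[μ] fun _ => v t) :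
    mgf (fun ω => ∑ t ∈ Icc 1 n, Z t ω) μ l ≤
      exp ((exp (l * B) - 1) / B * ∑ t ∈ Icc 1 n, v t) := by
  simp only [mgf, mul_sum]
  refine integral_exp_sum_Icc_le (fun t => (hZ t).const_mul l) (C := l * B)
    (fun t ht => ?_) fun t ht => ?_
  · filter_upwards [hZB t ht] with ω hω using mul_le_mul_of_nonneg_left hω.2 hl
  · exact condExp_exp_mul_le (ℱ.le _) hB hl ((hZ t).mono (ℱ.le t) le_rfl).aestronglyMeasurable
      (hZB t ht) (hv t ht)

lemma measureReal_le_sum_Icc_le (hZ : Adapted ℱ Z) (hB : 0 < B) (hl : 0 ≤ l)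
    (hZB : ∀ t ∈ Icc 1 n, ∀ᵐ ω ∂μ, 0 ≤ Z t ω ∧ Z t ω ≤ B)
    (hv : ∀ t ∈ Icc 1 n, μ[Z t | ℱ (t - 1)] ≤ᵐ[μ] fun _ => v t) (a : ℝ) :
    μ.real {ω | a ≤ ∑ t ∈ Icc 1 n, Z t ω} ≤
      exp (-l * a + (exp (l * B) - 1) / B * ∑ t ∈ Icc 1 n, v t) := by
  have hint := integrable_exp_mul_sum_Icc hZ hl fun t ht => (hZB t ht).mono fun _ h => h.2
  rw [exp_add]
  exact (measure_ge_le_exp_mul_mgf a hl hint).trans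
    (mul_le_mul_of_nonneg_left (mgf_sum_Icc_le hZ hB hl hZB hv) (exp_pos _).le)

end

/-- The choice `l = 5 / (4 B)` in `measureReal_le_sum_Icc_le` is where the constants `7 / 6`
and `2` come from. -/
lemma bennett_exponent_le {B L V : ℝ} (hB : 0 < B) (hL : 0 ≤ L) (hV : 0 ≤ V) :
    -(5 / (4 * B)) * (7 * B / 6 * L + 2 * V) + (exp (5 / (4 * B) * B) - 1) / B * V ≤ -L := by
  have hlB : 5 / (4 * B) * B = 5 / 4 := by field_simp
  have hexp : (exp (5 / 4) - 1) / B * V ≤ 5 / 2 / B * V := by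
    gcongr
    linarith [exp_five_div_four_lt]
  have hlin : -(5 / (4 * B)) * (7 * B / 6 * L + 2 * V) = -(35 / 24) * L - 5 / 2 / B * V := by
    field_simp
    ring
  rw [hlB, hlin]
  linarith

theorem sum_squares_high_prob_bound_general {Ω : Type*} {m0 : MeasurableSpace Ω}
    (μ : Measure Ω) [IsProbabilityMeasure μ]
    (ℱ : Filtration ℕ m0) (T : ℕ) (X : ℕ → Ω → ℝ) (b : ℝ) (σ : ℕ → ℝ)
    (hadapted : Adapted ℱ X)
    (hbound : ∀ t, 1 ≤ t → t ≤ T → ∀ᵐ ω ∂μ, |X t ω| ≤ b)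
    (hvar : ∀ t, 1 ≤ t → t ≤ T →
      ∀ᵐ ω ∂μ, (μ[fun ω' => X t ω' ^ 2 | ℱ (t - 1)]) ω ≤ σ t ^ 2)
    (δ : ℝ) (hδ0 : 0 < δ) (hδ1 : δ ≤ 1) :
    ENNReal.ofReal (1 - δ) ≤
      μ {ω | ∑ t ∈ Finset.Icc 1 T, X t ω ^ 2 ≤
        7 * b ^ 2 / 6 * Real.log (1 / δ) + 2 * ∑ t ∈ Finset.Icc 1 T, σ t ^ 2} := by
  have hL : 0 ≤ log (1 / δ) := log_nonneg (one_le_one_div hδ0 hδ1)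
  have hV : 0 ≤ ∑ t ∈ Icc 1 T, σ t ^ 2 := sum_nonneg fun _ _ => sq_nonneg _
  set a := 7 * b ^ 2 / 6 * log (1 / δ) + 2 * ∑ t ∈ Icc 1 T, σ t ^ 2
  have ha : 0 ≤ a := add_nonneg (mul_nonneg (by positivity) hL) (mul_nonneg zero_le_two hV)
  have hXB : ∀ t ∈ Icc 1 T, ∀ᵐ ω ∂μ, 0 ≤ X t ω ^ 2 ∧ X t ω ^ 2 ≤ b ^ 2 := fun t ht => by
    filter_upwards [hbound t (mem_Icc.1 ht).1 (mem_Icc.1 ht).2] with ω hω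
    exact ⟨sq_nonneg _, sq_le_sq.2 (hω.trans (le_abs_self b))⟩
  refine ofReal_one_sub_le_measure_of_compl_le hδ0.le ?_
  rcases (sq_nonneg b).eq_or_lt with hb | hb
  · refine (measure_eq_zero_iff_ae_notMem.2 ?_).trans_le zero_le
    filter_upwards [(Filter.eventually_all_finset _).2 hXB] with ω hω
    rw [Set.mem_compl_iff, not_not, Set.mem_ofPred_eq,
      sum_eq_zero fun t ht => le_antisymm ((hω t ht).2.trans_eq hb.symm) (hω t ht).1]
    exact ha
  · have htail : μ.real {ω | a ≤ ∑ t ∈ Icc 1 T, X t ω ^ 2} ≤ δ :=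
      calc _ ≤ exp (-log (1 / δ)) :=
            (measureReal_le_sum_Icc_le (fun t => (hadapted t).pow_const 2) hb
              (l := 5 / (4 * b ^ 2)) (by positivity) hXB
              (fun t ht => hvar t (mem_Icc.1 ht).1 (mem_Icc.1 ht).2) a).trans
            (exp_le_exp.2 (bennett_exponent_le hb hL hV))
        _ = δ := by rw [one_div, log_inv, neg_neg, exp_log hδ0]
    calc μ {ω | ∑ t ∈ Icc 1 T, X t ω ^ 2 ≤ a}ᶜ ≤ μ {ω | a ≤ ∑ t ∈ Icc 1 T, X t ω ^ 2} :=
          measure_mono (Set.compl_ofPred _ ▸ Set.ofPred_subset_ofPred.2 fun _ => le_of_not_ge)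
      _ = ENNReal.ofReal (μ.real _) := (ofReal_measureReal (measure_ne_top μ _)).symm
      _ ≤ ENNReal.ofReal δ := ENNReal.ofReal_le_ofReal htail

theorem sum_squares_high_prob_bound {Ω : Type*} {m0 : MeasurableSpace Ω}
    (μ : Measure Ω) [IsProbabilityMeasure μ]
    (ℱ : Filtration ℕ m0) (T : ℕ) (X : ℕ → Ω → ℝ) (b : ℝ) (σ : ℕ → ℝ)
    (hb : 0 ≤ b)
    (hadapted : Adapted ℱ X)
    (hbound : ∀ t, 1 ≤ t → t ≤ T → ∀ᵐ ω ∂μ, |X t ω| ≤ b)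
    (hvar : ∀ t, 1 ≤ t → t ≤ T →
      ∀ᵐ ω ∂μ, (μ[fun ω' => X t ω' ^ 2 | ℱ (t - 1)]) ω ≤ σ t ^ 2)
    (δ : ℝ) (hδ0 : 0 < δ) (hδ1 : δ ≤ 1) :
    ENNReal.ofReal (1 - δ) ≤
      μ {ω | ∑ t ∈ Finset.Icc 1 T, X t ω ^ 2 ≤
        7 * b ^ 2 / 6 * Real.log (1 / δ) + 2 * ∑ t ∈ Finset.Icc 1 T, σ t ^ 2} :=
  sum_squares_high_prob_bound_general μ ℱ T X b σ hadapted hbound hvar δ hδ0 hδ1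
end
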